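/- Let T̅, T̅' be upper transition operators with Dₙ = d(T̅ⁿ, T̅'ⁿ) and ρᵢ = ρ(T̅ⁱ). Then Dₙ ≤ D₁ · Σ_{i=0}^{n-1} ρᵢ for all n ≥ 1. -/

import Mathlib

open Finset Set

noncomputable section

/-- Functions with values in [0,1]. -/
def L1 (X : Type*) : Set (X → ℝ) := {f | ∀ x, 0 ≤ f x ∧ f x ≤ 1}

/-- Probability mass function on a finite set. -/
def IsPMF {X : Type*} [Fintype X] (p : X → ℝ) : Prop :=
  (∀ x, 0 ≤ p x) ∧ ∑ x, p x = 1

/-- A credal set: nonempty compact convex set of pmfs. -/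
def IsCredal {X : Type*} [Fintype X] (M : Set (X → ℝ)) : Prop :=
  M.Nonempty ∧ IsCompact M ∧ Convex ℝ M ∧ ∀ p ∈ M, IsPMF p

/-- Linear expectation with respect to a pmf. -/
def linExp {X : Type*} [Fintype X] (p f : X → ℝ) : ℝ := ∑ x, p x * f x

/-- Upper expectation functional of a credal set. -/
def upperExp {X : Type*} [Fintype X] (M : Set (X → ℝ)) (f : X → ℝ) : ℝ :=
  sSup ((fun p => linExp p f) '' M)

/-- Lower expectation functional of a credal set. -/
def lowerExp {X : Type*} [Fintype X] (M : Set (X → ℝ)) (f : X → ℝ) : ℝ :=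
  sInf ((fun p => linExp p f) '' M)

/-- Chebyshev (sup) distance between functions. -/
def dCheb {X : Type*} (f g : X → ℝ) : ℝ := ⨆ x, |f x - g x|

/-- Distance between two (upper) expectation functionals. -/
def dFun {X : Type*} (F G : (X → ℝ) → ℝ) : ℝ :=
  sSup ((fun f => |F f - G f|) '' L1 X)

/-- Distance between an upper and a lower expectation functional. -/
def dUL {X : Type*} (F G : (X → ℝ) → ℝ) : ℝ :=
  sSup ((fun f => F f - G f) '' L1 X)

/-- Upper transition operator: rows are upper expectation functionals. -/
def IsUpperTrans {X : Type*} [Fintype X] (T : (X → ℝ) → (X → ℝ)) : Prop :=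
  ∃ M : X → Set (X → ℝ), (∀ x, IsCredal (M x)) ∧ ∀ f x, T f x = upperExp (M x) f

/-- Matching pair of upper and lower transition operators from the same credal sets. -/
def IsTransPair {X : Type*} [Fintype X] (T Tl : (X → ℝ) → (X → ℝ)) : Prop :=
  ∃ M : X → Set (X → ℝ), (∀ x, IsCredal (M x)) ∧
    (∀ f x, T f x = upperExp (M x) f) ∧ (∀ f x, Tl f x = lowerExp (M x) f)

/-- Distance between two (upper) transition operators. -/
def dOp {X : Type*} (T T' : (X → ℝ) → (X → ℝ)) : ℝ :=
  sSup ((fun f => dCheb (T f) (T' f)) '' L1 X)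

/-- Imprecision distance between an upper and a lower transition operator. -/
def dOpUL {X : Type*} (T Tl : (X → ℝ) → (X → ℝ)) : ℝ :=
  sSup ((fun f => ⨆ x, (T f x - Tl f x)) '' L1 X)

/-- Weak coefficient of ergodicity. -/
def rho {X : Type*} (T : (X → ℝ) → (X → ℝ)) : ℝ :=
  sSup {r | ∃ f ∈ L1 X, ∃ x y : X, r = |T f x - T f y|}

/-!
Telescope `T^[k+1] f - T'^[k+1] f` as `(T - T') (T^[k] f) + (T' (T^[k] f) - T' (T'^[k] f))`.
An upper transition operator commutes with positive affine maps `c + r • _`, and `T^[k] f` has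
oscillation at most `ρ_k`, so it is `c + ρ_k • w` with `w ∈ L1`; hence the first term is at most
`ρ_k D₁`. The second term is handled by induction, since an upper transition operator is
monotone and commutes with constant shifts, hence is nonexpansive in the sup norm.
-/

section UpperExp

variable {X : Type*} [Fintype X] {M : Set (X → ℝ)} {p : X → ℝ}

lemma continuous_linExp (f : X → ℝ) : Continuous fun p : X → ℝ => linExp p f :=
  continuous_finsetSum _ fun x _ => (continuous_apply x).mul continuous_const

lemma IsCredal.bddAbove_image_linExp (hM : IsCredal M) (f : X → ℝ) :
    BddAbove ((fun p => linExp p f) '' M) :=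
  (hM.2.1.image (continuous_linExp f)).bddAbove

lemma IsPMF.linExp_mono (hp : IsPMF p) {f g : X → ℝ} (hfg : f ≤ g) :
    linExp p f ≤ linExp p g :=
  Finset.sum_le_sum fun x _ => mul_le_mul_of_nonneg_left (hfg x) (hp.1 x)

lemma IsPMF.linExp_const_add_mul (hp : IsPMF p) (c r : ℝ) (w : X → ℝ) :
    linExp p (fun x => c + r * w x) = c + r * linExp p w := by
  simp only [linExp, mul_add, Finset.sum_add_distrib, ← Finset.sum_mul, hp.2, one_mul,
    Finset.mul_sum]
  exact congrArg _ (Finset.sum_congr rfl fun x _ => by ring)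

lemma IsPMF.linExp_mem_Icc (hp : IsPMF p) {f : X → ℝ} (hf : f ∈ L1 X) :
    linExp p f ∈ Set.Icc (0 : ℝ) 1 := by
  refine ⟨Finset.sum_nonneg fun x _ => mul_nonneg (hp.1 x) (hf x).1, ?_⟩
  calc linExp p f ≤ linExp p (fun _ => 1) := hp.linExp_mono fun x => (hf x).2
    _ = 1 := by simp [linExp, hp.2]

lemma upperExp_mono (hM : IsCredal M) : Monotone (upperExp M) := by
  intro f g hfg
  refine csSup_le (hM.1.image _) ?_
  rintro _ ⟨p, hp, rfl⟩
  exact ((hM.2.2.2 p hp).linExp_mono hfg).trans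
    (le_csSup (hM.bddAbove_image_linExp g) ⟨p, hp, rfl⟩)

lemma upperExp_const_add_mul (hM : IsCredal M) (c : ℝ) {r : ℝ} (hr : 0 ≤ r) (w : X → ℝ) :
    upperExp M (fun x => c + r * w x) = c + r * upperExp M w := by
  have himage : (fun p => linExp p (fun x => c + r * w x)) '' M
      = (fun t => c + r * t) '' ((fun p => linExp p w) '' M) := by
    rw [Set.image_image]
    exact Set.image_congr fun p hp => (hM.2.2.2 p hp).linExp_const_add_mul c r w
  have hmono : Monotone fun t : ℝ => c + r * t := fun _ _ hab => add_le_add_right (mul_le_mul_of_nonneg_left hab hr) c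
  rw [upperExp, himage]
  exact (hmono.map_csSup_of_continuousAt (by fun_prop) (hM.1.image _)
    (hM.bddAbove_image_linExp w)).symm

lemma upperExp_mem_Icc (hM : IsCredal M) {f : X → ℝ} (hf : f ∈ L1 X) :
    upperExp M f ∈ Set.Icc (0 : ℝ) 1 := by
  obtain ⟨p, hp⟩ := hM.1
  refine ⟨((hM.2.2.2 p hp).linExp_mem_Icc hf).1.trans
    (le_csSup (hM.bddAbove_image_linExp f) ⟨p, hp, rfl⟩), ?_⟩
  refine csSup_le ⟨_, p, hp, rfl⟩ ?_
  rintro _ ⟨q, hq, rfl⟩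
  exact ((hM.2.2.2 q hq).linExp_mem_Icc hf).2

end UpperExp

namespace IsUpperTrans

variable {X : Type*} [Fintype X] {T : (X → ℝ) → X → ℝ}

lemma monotone (hT : IsUpperTrans T) : Monotone T := by
  obtain ⟨M, hM, hTM⟩ := hT
  intro f g hfg x
  simpa only [hTM] using upperExp_mono (hM x) hfg

lemma apply_const_add_mul (hT : IsUpperTrans T) (c : ℝ) {r : ℝ} (hr : 0 ≤ r) (w : X → ℝ)
    (x : X) : T (fun y => c + r * w y) x = c + r * T w x := by
  obtain ⟨M, hM, hTM⟩ := hT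
  simp only [hTM, upperExp_const_add_mul (hM x) c hr w]

lemma apply_const_add (hT : IsUpperTrans T) (c : ℝ) (w : X → ℝ) (x : X) :
    T (fun y => c + w y) x = c + T w x := by
  simpa only [one_mul] using hT.apply_const_add_mul c zero_le_one w x

lemma mapsTo_L1 (hT : IsUpperTrans T) : MapsTo T (L1 X) (L1 X) := by
  obtain ⟨M, hM, hTM⟩ := hT
  intro f hf x
  rw [hTM]
  exact upperExp_mem_Icc (hM x) hf

lemma abs_sub_le (hT : IsUpperTrans T) {f g : X → ℝ} {c : ℝ} (hfg : ∀ y, |f y - g y| ≤ c)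
    (x : X) : |T f x - T g x| ≤ c := by
  have hshift : ∀ {a b : X → ℝ}, (∀ y, a y - b y ≤ c) → T a x ≤ c + T b x := by
    intro a b hab
    rw [← hT.apply_const_add]
    exact hT.monotone (fun y => by linarith [hab y]) x
  rw [abs_sub_le_iff]
  constructor
  · linarith [hshift fun y => (abs_sub_le_iff.mp (hfg y)).1]
  · linarith [hshift fun y => (abs_sub_le_iff.mp (hfg y)).2]

end IsUpperTrans

section Distances

variable {X : Type*}

lemma abs_sub_le_one_of_mem_L1 {f g : X → ℝ} (hf : f ∈ L1 X) (hg : g ∈ L1 X) (x y : X) :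
    |f x - g y| ≤ 1 := by
  rw [abs_sub_le_iff]
  constructor <;> linarith [hf x, hg y]

lemma exists_mem_L1_eq_const_add_mul_of_abs_sub_le [Finite X] [Nonempty X] {u : X → ℝ} {r : ℝ}
    (hr : 0 ≤ r) (hu : ∀ x y, |u x - u y| ≤ r) :
    ∃ c, ∃ w ∈ L1 X, u = fun y => c + r * w y := by
  obtain ⟨y₀, hy₀⟩ := Finite.exists_min u
  rcases hr.eq_or_lt with rfl | hr
  · refine ⟨u y₀, 0, fun _ => ⟨le_rfl, zero_le_one⟩, funext fun y => ?_⟩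
    simpa [sub_eq_zero] using hu y y₀
  · refine ⟨u y₀, fun y => (u y - u y₀) / r, fun y => ⟨?_, ?_⟩, ?_⟩
    · exact div_nonneg (sub_nonneg.mpr (hy₀ y)) hr.le
    · exact (div_le_one hr).mpr ((le_abs_self _).trans (hu y y₀))
    · funext y
      field_simp
      ring

lemma abs_sub_le_dCheb [Finite X] (f g : X → ℝ) (x : X) : |f x - g x| ≤ dCheb f g :=
  le_ciSup (f := fun x => |f x - g x|) (Finite.bddAbove_range _) x

lemma dOp_nonneg (T T' : (X → ℝ) → X → ℝ) : 0 ≤ dOp T T' :=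
  Real.sSup_nonneg <| by
    rintro _ ⟨f, -, rfl⟩
    exact Real.iSup_nonneg fun x => abs_nonneg _

lemma abs_apply_sub_le_dOp [Finite X] {T T' : (X → ℝ) → X → ℝ} (hT : MapsTo T (L1 X) (L1 X))
    (hT' : MapsTo T' (L1 X) (L1 X)) {f : X → ℝ} (hf : f ∈ L1 X) (x : X) :
    |T f x - T' f x| ≤ dOp T T' := by
  have hbdd : BddAbove ((fun f => dCheb (T f) (T' f)) '' L1 X) := by
    refine ⟨1, ?_⟩
    rintro _ ⟨g, hg, rfl⟩
    exact Real.iSup_le (fun x => abs_sub_le_one_of_mem_L1 (hT hg) (hT' hg) x x) zero_le_one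
  exact (abs_sub_le_dCheb _ _ x).trans (le_csSup hbdd ⟨f, hf, rfl⟩)

lemma rho_nonneg (S : (X → ℝ) → X → ℝ) : 0 ≤ rho S :=
  Real.sSup_nonneg <| by
    rintro _ ⟨f, -, x, y, rfl⟩
    exact abs_nonneg _

lemma abs_apply_sub_apply_le_rho {S : (X → ℝ) → X → ℝ} (hS : MapsTo S (L1 X) (L1 X))
    {f : X → ℝ} (hf : f ∈ L1 X) (x y : X) : |S f x - S f y| ≤ rho S := by
  have hbdd : BddAbove {r | ∃ f ∈ L1 X, ∃ x y : X, r = |S f x - S f y|} := by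
    refine ⟨1, ?_⟩
    rintro _ ⟨g, hg, x, y, rfl⟩
    exact abs_sub_le_one_of_mem_L1 (hS hg) (hS hg) x y
  exact le_csSup hbdd ⟨f, hf, x, y, rfl⟩

end Distances

section Iterates

variable {X : Type*} [Fintype X] {T T' : (X → ℝ) → X → ℝ}

lemma abs_apply_sub_le_mul_dOp (hT : IsUpperTrans T) (hT' : IsUpperTrans T') {u : X → ℝ}
    {r : ℝ} (hr : 0 ≤ r) (hu : ∀ x y, |u x - u y| ≤ r) (x : X) :
    |T u x - T' u x| ≤ r * dOp T T' := by
  have : Nonempty X := ⟨x⟩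
  obtain ⟨c, w, hw, rfl⟩ := exists_mem_L1_eq_const_add_mul_of_abs_sub_le hr hu
  rw [hT.apply_const_add_mul c hr, hT'.apply_const_add_mul c hr, add_sub_add_left_eq_sub,
    ← mul_sub, abs_mul, abs_of_nonneg hr]
  exact mul_le_mul_of_nonneg_left (abs_apply_sub_le_dOp hT.mapsTo_L1 hT'.mapsTo_L1 hw x) hr

lemma abs_iterate_apply_sub_le (hT : IsUpperTrans T) (hT' : IsUpperTrans T') (k : ℕ)
    {f : X → ℝ} (hf : f ∈ L1 X) (x : X) :
    |T^[k] f x - T'^[k] f x| ≤ dOp T T' * ∑ i ∈ Finset.range k, rho (T^[i]) := by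
  induction k generalizing x with
  | zero => simp
  | succ k ih =>
    have hstep : |T (T^[k] f) x - T' (T^[k] f) x| ≤ rho (T^[k]) * dOp T T' :=
      abs_apply_sub_le_mul_dOp hT hT' (rho_nonneg _)
        (abs_apply_sub_apply_le_rho (hT.mapsTo_L1.iterate k) hf) x
    have hrest : |T' (T^[k] f) x - T' (T'^[k] f) x|
        ≤ dOp T T' * ∑ i ∈ Finset.range k, rho (T^[i]) :=
      hT'.abs_sub_le ih x
    rw [Function.iterate_succ_apply', Function.iterate_succ_apply', Finset.sum_range_succ]
    calc |T (T^[k] f) x - T' (T'^[k] f) x|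
        ≤ |T (T^[k] f) x - T' (T^[k] f) x| + |T' (T^[k] f) x - T' (T'^[k] f) x| :=
          abs_sub_le _ _ _
      _ ≤ _ := by linarith

end Iterates

theorem stmt13_general {X : Type*} [Fintype X]
    (T T' : (X → ℝ) → (X → ℝ)) (hT : IsUpperTrans T) (hT' : IsUpperTrans T')
    (n : ℕ) :
    dOp (T^[n]) (T'^[n]) ≤ dOp T T' * ∑ i ∈ Finset.range n, rho (T^[i]) := by
  have hbound : 0 ≤ dOp T T' * ∑ i ∈ Finset.range n, rho (T^[i]) :=
    mul_nonneg (dOp_nonneg T T') (Finset.sum_nonneg fun i _ => rho_nonneg _)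
  refine Real.sSup_le ?_ hbound
  rintro _ ⟨f, hf, rfl⟩
  exact Real.iSup_le (abs_iterate_apply_sub_le hT hT' n hf) hbound

theorem stmt13 {X : Type*} [Fintype X] [Nonempty X]
    (T T' : (X → ℝ) → (X → ℝ)) (hT : IsUpperTrans T) (hT' : IsUpperTrans T')
    (n : ℕ) (hn : 1 ≤ n) :
    dOp (T^[n]) (T'^[n]) ≤ dOp T T' * ∑ i ∈ Finset.range n, rho (T^[i]) :=
  stmt13_general T T' hT hT' n
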